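/- Every independent set I of Q_d is captured by the odd or the even polymer model: it is impossible that I contains both a 2-linked set S ⊆ O with |[S]| > 2^{d-2} and a 2-linked set S' ⊆ E with |[S']| > 2^{d-2}. -/

import Mathlib

open Finset

/-- The hypercube graph `Q_d` on `{0,1}^d`: vertices adjacent iff they differ in
exactly one coordinate. -/
def cubeGraph (d : ℕ) : SimpleGraph (Fin d → Bool) where
  Adj x y := hammingDist x y = 1
  symm := ⟨fun (x y : Fin d → Bool) (h : hammingDist x y = 1) => show hammingDist y x = 1 by rw [hammingDist_comm]; exact h⟩
  loopless := ⟨fun x (h : hammingDist x x = 1) => by simp [hammingDist_self] at h⟩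

/-- The distance-2 graph on `{0,1}^d`: vertices adjacent iff Hamming distance 2. -/
def distTwoGraph (d : ℕ) : SimpleGraph (Fin d → Bool) where
  Adj x y := hammingDist x y = 2
  symm := ⟨fun (x y : Fin d → Bool) (h : hammingDist x y = 2) => show hammingDist y x = 2 by rw [hammingDist_comm]; exact h⟩
  loopless := ⟨fun x (h : hammingDist x x = 2) => by simp [hammingDist_self] at h⟩

/-- The even side `E` of the bipartition of `Q_d`. -/
def evenFinset (d : ℕ) : Finset (Fin d → Bool) :=
  Finset.univ.filter fun x => Even (∑ i, if x i then 1 else 0 : ℕ)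

/-- The odd side `O` of the bipartition of `Q_d`. -/
def oddFinset (d : ℕ) : Finset (Fin d → Bool) :=
  Finset.univ.filter fun x => ¬ Even (∑ i, if x i then 1 else 0 : ℕ)

/-- The neighbourhood `N(A)` of a set of vertices in `Q_d`. -/
def nbhd (d : ℕ) (A : Finset (Fin d → Bool)) : Finset (Fin d → Bool) :=
  A.biUnion fun x => Finset.univ.filter fun y => hammingDist x y = 1

/-- `S` is 2-linked: connected in the square of `Q_d` (for `S` inside one side of the
bipartition this is connectivity in the distance-2 graph). -/
def TwoLinked (d : ℕ) (S : Finset (Fin d → Bool)) : Prop :=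
  ((distTwoGraph d).induce (S : Set (Fin d → Bool))).Connected

/-- The bipartite closure `[A]` of `A` relative to a side `P` of the bipartition:
vertices of `P` all of whose neighbours are neighbours of `A`. -/
def closureIn (d : ℕ) (P A : Finset (Fin d → Bool)) : Finset (Fin d → Bool) :=
  P.filter fun v => nbhd d {v} ⊆ nbhd d A

/-- Flipping the `i`-th coordinate of a vertex of the cube. -/
def flipAt {d : ℕ} (i : Fin d) (v : Fin d → Bool) : Fin d → Bool :=
  Function.update v i (! v i)

lemma flipAt_flipAt {d : ℕ} (i : Fin d) (v : Fin d → Bool) :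
    flipAt i (flipAt i v) = v := by
  funext j
  simp [flipAt, Function.update_apply]
  by_cases h : j = i <;> simp [h]

lemma flipAt_inj {d : ℕ} (i : Fin d) : Function.Injective (flipAt (d := d) i) :=
  Function.LeftInverse.injective (flipAt_flipAt i)

lemma hammingDist_flipAt {d : ℕ} (i : Fin d) (v : Fin d → Bool) :
    hammingDist v (flipAt i v) = 1 := by
  have h : ({j | v j ≠ flipAt i v j} : Finset (Fin d)) = {i} := by
    ext j
    by_cases h : j = i <;> simp [flipAt, Function.update_apply, h]
  rw [hammingDist, h, card_singleton]

lemma parity_flip {d : ℕ} {x y : Fin d → Bool} (h : hammingDist x y = 1) :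
    Even (∑ i, if y i then 1 else 0 : ℕ) ↔ ¬ Even (∑ i, if x i then 1 else 0 : ℕ) := by
  have key : (∑ i, if x i then 1 else 0 : ℕ) + (∑ i, if y i then 1 else 0 : ℕ)
      = hammingDist x y + 2 * ∑ i, (if x i ∧ y i then 1 else 0 : ℕ) := by
    rw [hammingDist, card_filter, Finset.mul_sum, ← Finset.sum_add_distrib,
      ← Finset.sum_add_distrib]
    refine Finset.sum_congr rfl fun i _ => ?_
    cases hx : x i <;> cases hy : y i <;> simp
  rw [h] at key
  rw [Nat.even_iff, Nat.even_iff]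
  omega

lemma card_evenFinset (d : ℕ) (hd : 1 ≤ d) : (evenFinset d).card = 2 ^ (d - 1) := by
  have i0 : Fin d := ⟨0, hd⟩
  have hcards : (evenFinset d).card = (oddFinset d).card := by
    refine Finset.card_bij' (fun v _ => flipAt i0 v) (fun v _ => flipAt i0 v) ?_ ?_ ?_ ?_
    · intro v hv
      simp only [evenFinset, oddFinset, mem_filter, mem_univ, true_and] at hv ⊢
      exact (parity_flip (hammingDist_flipAt i0 v)).not.mpr (by simpa using hv)
    · intro v hv
      simp only [evenFinset, oddFinset, mem_filter, mem_univ, true_and] at hv ⊢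
      exact (parity_flip (hammingDist_flipAt i0 v)).mpr hv
    · intro v _; exact flipAt_flipAt i0 v
    · intro v _; exact flipAt_flipAt i0 v
  have hsum : (evenFinset d).card + (oddFinset d).card = 2 ^ d := by
    rw [evenFinset, oddFinset, Finset.card_filter_add_card_filter_not]
    simp [Finset.card_univ]
  have hpow : 2 ^ d = 2 * 2 ^ (d - 1) := by
    conv_lhs => rw [show d = (d - 1) + 1 by omega]
    ring
  omega

lemma mem_nbhd {d : ℕ} {A : Finset (Fin d → Bool)} {y : Fin d → Bool} :
    y ∈ nbhd d A ↔ ∃ x ∈ A, hammingDist x y = 1 := by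
  simp [nbhd]

/-- Every independent set of `Q_d` is captured by the odd or the even polymer model:
it cannot contain both a 2-linked `S ⊆ O` with `|[S]| > 2^(d-2)` and a 2-linked
`S' ⊆ E` with `|[S']| > 2^(d-2)`. -/
theorem captured_by_odd_or_even (d : ℕ) (hd : 1 ≤ d) (I : Finset (Fin d → Bool))
    (hI : ∀ x ∈ I, ∀ y ∈ I, ¬ (cubeGraph d).Adj x y) :
    ¬ ((∃ S, S ⊆ I ∧ S ⊆ oddFinset d ∧ TwoLinked d S ∧
          2 ^ (d - 2) < (closureIn d (oddFinset d) S).card) ∧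
       (∃ S', S' ⊆ I ∧ S' ⊆ evenFinset d ∧ TwoLinked d S' ∧
          2 ^ (d - 2) < (closureIn d (evenFinset d) S').card)) := by
  rintro ⟨⟨S, hSI, hSO, -, hScard⟩, ⟨S', hS'I, hS'E, -, hS'card⟩⟩
  set A := closureIn d (oddFinset d) S with hA
  set B := closureIn d (evenFinset d) S' with hB
  have i0 : Fin d := ⟨0, hd⟩
  -- the flipped copy of A lands inside N(S)
  have hAimage : A.image (flipAt i0) ⊆ nbhd d S := by
    intro y hy
    rcases Finset.mem_image.mp hy with ⟨v, hv, rfl⟩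
    have hv' : nbhd d {v} ⊆ nbhd d S := (Finset.mem_filter.mp hv).2
    exact hv' (mem_nbhd.mpr ⟨v, Finset.mem_singleton_self v, hammingDist_flipAt i0 v⟩)
  -- N(S) consists of even vertices
  have hNSE : nbhd d S ⊆ evenFinset d := by
    intro y hy
    rcases mem_nbhd.mp hy with ⟨x, hxS, hxy⟩
    have hxO : ¬ Even (∑ i, if x i then 1 else 0 : ℕ) :=
      (Finset.mem_filter.mp (hSO hxS)).2
    exact Finset.mem_filter.mpr ⟨Finset.mem_univ _, (parity_flip hxy).mpr hxO⟩
  -- N(S) is disjoint from B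
  have hdisj : Disjoint (nbhd d S) B := by
    rw [Finset.disjoint_left]
    intro y hy hyB
    rcases mem_nbhd.mp hy with ⟨s, hsS, hsy⟩
    have hyB' : nbhd d {y} ⊆ nbhd d S' := (Finset.mem_filter.mp hyB).2
    have hs : s ∈ nbhd d S' := by
      refine hyB' (mem_nbhd.mpr ⟨y, Finset.mem_singleton_self y, ?_⟩)
      rw [hammingDist_comm]; exact hsy
    rcases mem_nbhd.mp hs with ⟨s'', hs''S', hs''s⟩
    exact hI s'' (hS'I hs''S') s (hSI hsS) hs''s
  have hdisj2 : Disjoint (A.image (flipAt i0)) B :=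
    Finset.disjoint_of_subset_left hAimage hdisj
  have hsub : A.image (flipAt i0) ∪ B ⊆ evenFinset d := by
    refine Finset.union_subset (hAimage.trans hNSE) ?_
    intro y hy; exact (Finset.mem_filter.mp hy).1
  have hcard1 : (A.image (flipAt i0)).card = A.card :=
    Finset.card_image_of_injective _ (flipAt_inj i0)
  have hle : (A.image (flipAt i0)).card + B.card ≤ 2 ^ (d - 1) := by
    rw [← Finset.card_union_of_disjoint hdisj2, ← card_evenFinset d hd]
    exact Finset.card_le_card hsub
  have hpow : 2 ^ (d - 1) ≤ 2 * 2 ^ (d - 2) := by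
    calc 2 ^ (d - 1) ≤ 2 ^ (d - 2 + 1) := Nat.pow_le_pow_right (by norm_num) (by omega)
    _ = 2 * 2 ^ (d - 2) := by ring
  omega
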